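/- Let G be a graph on n vertices, let d = d(n) ≥ 1, and let C₁, C₂, C₃, M be positive constants. Let ℵ_M = {v : deg(v) ≤ d/M}, let W be the set of vertices of positive degree, and let I be the number of isolated vertices. Suppose: (1) every vertex has degree at most C₁ d; (2) sup{ |xᵗAy| : ‖x‖ = 1, xᵗ𝟙 = 0, ‖y‖ = 1 } ≤ C₂√d; (3) there are no edges between vertices of ℵ_M, |ℵ_M| ≤ n/2, and every vertex outside ℵ_M has at most one neighbor in ℵ_M; (4) sup{ |xᵗ T^{−1/2} 𝟙_{ℵ_M^c}| : ‖x‖ = 1, xᵗ T^{1/2}𝟙_W = 0 } ≤ C₃ √n / d. Then there is a constant C = C(C₁,C₂,C₃,M) such that max_{i > I+1} |1 − λ_i| < C/√d, where 0 = λ_1 ≤ λ_2 ≤ … ≤ λ_n are the eigenvalues of the normalized Laplacian of G. -/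

import Mathlib

open MeasureTheory

open scoped Classical in
noncomputable def normLap {V : Type*} [Fintype V] (G : SimpleGraph V) : Matrix V V ℝ :=
  fun u v =>
    (if u = v ∧ 0 < G.degree u then (1 : ℝ) else 0) -
      (if G.Adj u v then 1 / (Real.sqrt (G.degree u) * Real.sqrt (G.degree v)) else 0)

lemma normLap_isHermitian {V : Type*} [Fintype V] (G : SimpleGraph V) :
    (normLap G).IsHermitian := by
  classical
  unfold Matrix.IsHermitian
  ext u v
  simp only [Matrix.conjTranspose_apply, star_trivial, normLap]
  by_cases h : u = v
  · subst h; rfl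
  · have h1 : ¬(v = u ∧ 0 < G.degree v) := fun hc => h hc.1.symm
    have h2 : ¬(u = v ∧ 0 < G.degree u) := fun hc => h hc.1
    rw [if_neg h1, if_neg h2]
    by_cases hadj : G.Adj u v
    · rw [if_pos hadj, if_pos (G.adj_symm hadj), mul_comm]
    · rw [if_neg hadj, if_neg (fun hc => hadj (G.adj_symm hc))]

noncomputable def sortedLapEigs {V : Type*} [Finite V] (G : SimpleGraph V) :
    Fin (Nat.card V) → ℝ :=
  letI : Fintype V := Fintype.ofFinite V
  letI : DecidableEq V := Classical.decEq V
  let f : Fin (Nat.card V) → ℝ := fun i =>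
    (normLap_isHermitian G).eigenvalues
      ((Fintype.equivFin V).symm (finCongr (Nat.card_eq_fintype_card) i))
  f ∘ Tuple.sort f

noncomputable def lambdaGap {V : Type*} [Finite V] (G : SimpleGraph V) : ℝ :=
  ⨆ i : {i : Fin (Nat.card V) // 0 < (i : ℕ)}, |1 - sortedLapEigs G i.1|

/-!
On a unit vector `x` that vanishes on the isolated vertices and is orthogonal to `T^{1/2} 𝟙`,
`1 - xᵀ L x = zᵀ A z` with `z = T^{-1/2} x`. Split `z = z₁ + z₂` along `ℵ_M` and its complement.
Since `ℵ_M` is independent, `z₁ᵀ A z₁ = 0`. Since a vertex outside `ℵ_M` has at most one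
neighbour in `ℵ_M`, Cauchy–Schwarz bounds `z₁ᵀ A z₂` by `‖T^{1/2} z₁‖ ‖z₂‖ ≤ √(M / d)`. Finally
`‖z₂‖² ≤ M / d`, and condition (4) makes the mean `c` of `z₂` of size `C₃ / (d √n)`; writing
`z₂ = w + c 𝟙` with `w ⊥ 𝟙`, condition (2) bounds `wᵀ A w` and `wᵀ A 𝟙`, and condition (1) bounds
`𝟙ᵀ A 𝟙 ≤ C₁ d n`. So the quadratic form of `L` is within `C / √d` of `1` on the orthogonal
complement of a subspace `K ⊆ ker L` of dimension at most `I + 1`. An eigenvector of `L` either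
lies in `K` with eigenvalue `0`, or has its eigenvalue within `C / √d` of `1`; as at most `I + 1`
orthonormal eigenvectors fit into `K`, every `λ_i` with `i > I + 1` is of the second kind.
-/

open scoped Classical

section Spectral

open scoped InnerProductSpace

variable {E : Type*} [NormedAddCommGroup E] [InnerProductSpace ℝ E]
  {T : E →ₗ[ℝ] E} {K : Submodule ℝ E} {ε : ℝ}

theorem abs_one_sub_le_of_eigenvector_mem_orthogonal
    (hε : ∀ x ∈ Kᗮ, ‖x‖ = 1 → |1 - ⟪T x, x⟫_ℝ| ≤ ε) {μ : ℝ} {b : E} (hb : b ∈ Kᗮ)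
    (hb0 : b ≠ 0) (hTb : T b = μ • b) : |1 - μ| ≤ ε := by
  have hnorm : ‖b‖ ≠ 0 := norm_ne_zero_iff.mpr hb0
  convert hε (‖b‖⁻¹ • b) (Kᗮ.smul_mem _ hb) (by simp [norm_smul, hnorm]) using 3
  rw [map_smul, hTb, real_inner_smul_left, real_inner_smul_right, real_inner_smul_left,
    real_inner_self_eq_norm_sq]
  field_simp

theorem abs_one_sub_le_or_mem_of_eigenvector (hT : T.IsSymmetric) [K.HasOrthogonalProjection]
    (hK : K ≤ LinearMap.ker T) (hε : ∀ x ∈ Kᗮ, ‖x‖ = 1 → |1 - ⟪T x, x⟫_ℝ| ≤ ε) {μ : ℝ}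
    {y : E} (hy : T y = μ • y) (hy0 : y ≠ 0) : |1 - μ| ≤ ε ∨ (μ = 0 ∧ y ∈ K) := by
  obtain ⟨a, ha, b, hb, rfl⟩ := K.exists_add_mem_mem_orthogonal y
  have hTb_mem : T b ∈ Kᗮ := fun k hk => by
    rw [← hT, show T k = 0 from hK hk, inner_zero_left]
  have hTb : T b = μ • a + μ • b := by
    rw [← smul_add, ← hy, map_add, show T a = 0 from hK ha, zero_add]
  have hμa : μ • a = 0 := Submodule.disjoint_def.mp K.orthogonal_disjoint _ (K.smul_mem μ ha)
    (by simpa [hTb] using Kᗮ.sub_mem hTb_mem (Kᗮ.smul_mem μ hb))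
  rw [hμa, zero_add] at hTb
  by_cases hb0 : b = 0
  · subst hb0
    rw [add_zero] at hy0 ⊢
    exact Or.inr ⟨(smul_eq_zero.mp hμa).resolve_right hy0, ha⟩
  · exact Or.inl (abs_one_sub_le_of_eigenvector_mem_orthogonal hε hb hb0 hTb)

theorem Orthonormal.card_le_finrank_of_forall_mem [FiniteDimensional ℝ K] {ι : Type*}
    [Fintype ι] {u : ι → E} (hu : Orthonormal ℝ u) (hK : ∀ i, u i ∈ K) :
    Fintype.card ι ≤ Module.finrank ℝ K :=
  (finrank_span_eq_card hu.linearIndependent).symm.trans_le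
    (Submodule.finrank_mono (Submodule.span_le.mpr (Set.range_subset_iff.mpr hK)))

theorem abs_one_sub_le_of_monotone_of_finrank_le [FiniteDimensional ℝ K] {ι : Type*}
    {u : ι → E} (hu : Orthonormal ℝ u) {μ : ι → ℝ}
    (hμ : ∀ i, |1 - μ i| ≤ ε ∨ (μ i = 0 ∧ u i ∈ K)) {m : ℕ} {τ : Fin m → ι}
    (hτ : Function.Injective τ) (hmono : Monotone (μ ∘ τ)) {j : Fin m}
    (hj : Module.finrank ℝ K ≤ j) : |1 - μ (τ j)| ≤ ε := by
  by_contra! hlt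
  have hμj : μ (τ j) = 0 := ((hμ _).resolve_left hlt.not_ge).1
  rw [hμj, sub_zero, abs_one] at hlt
  -- the eigenvalues up to index `j` are `≤ μ (τ j) = 0`, so they are no closer to `1`
  have hmem : ∀ i : Finset.Iic j, u (τ i) ∈ K := fun i => by
    refine ((hμ _).resolve_left fun hi => ?_).2
    have : μ (τ i) ≤ μ (τ j) := hmono (Finset.mem_Iic.mp i.2)
    linarith [le_abs_self (1 - μ (τ i))]
  have := (hu.comp _ (hτ.comp Subtype.val_injective)).card_le_finrank_of_forall_mem hmem
  rw [Fintype.card_coe, Fin.card_Iic] at this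
  omega

end Spectral

section QuadraticForm

open Matrix

variable {V : Type*} [Fintype V]

theorem Matrix.IsSymm.dotProduct_mulVec_comm {B : Matrix V V ℝ} (hB : B.IsSymm) (x y : V → ℝ) :
    x ⬝ᵥ B *ᵥ y = y ⬝ᵥ B *ᵥ x := by
  rw [dotProduct_mulVec, ← mulVec_transpose, hB.eq, dotProduct_comm]

theorem Matrix.IsSymm.add_dotProduct_mulVec_add {B : Matrix V V ℝ} (hB : B.IsSymm)
    (x y : V → ℝ) :
    (x + y) ⬝ᵥ B *ᵥ (x + y) = x ⬝ᵥ B *ᵥ x + 2 * (x ⬝ᵥ B *ᵥ y) + y ⬝ᵥ B *ᵥ y := by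
  simp only [mulVec_add, dotProduct_add, add_dotProduct, hB.dotProduct_mulVec_comm y x]
  ring

theorem Finset.sq_sum_le_sum_sq_of_subsingleton {ι : Type*} {s : Finset ι} {f : ι → ℝ}
    (hf : {i | i ∈ s ∧ f i ≠ 0}.Subsingleton) : (∑ i ∈ s, f i) ^ 2 ≤ ∑ i ∈ s, f i ^ 2 := by
  by_cases h : ∃ i ∈ s, f i ≠ 0
  · obtain ⟨i, hi, hfi⟩ := h
    rw [Finset.sum_eq_single_of_mem i hi fun j hj hji =>
      by_contra fun hfj => hji (hf ⟨hj, hfj⟩ ⟨hi, hfi⟩)]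
    exact Finset.single_le_sum (fun j _ => sq_nonneg (f j)) hi
  · push Not at h
    rw [Finset.sum_eq_zero h, zero_pow two_ne_zero]
    exact Finset.sum_nonneg fun i _ => sq_nonneg (f i)

theorem sum_sq_inv_sqrt_sum_sq_smul {a : V → ℝ} (ha : ∑ i, a i ^ 2 ≠ 0) :
    ∑ i, ((√(∑ j, a j ^ 2))⁻¹ • a) i ^ 2 = 1 := by
  simp only [Pi.smul_apply, smul_eq_mul, mul_pow, ← Finset.mul_sum, inv_pow,
    Real.sq_sqrt (Finset.sum_nonneg fun i _ => sq_nonneg (a i)), inv_mul_cancel₀ ha]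

theorem eq_zero_of_sum_sq_eq_zero {a : V → ℝ} (ha : ∑ i, a i ^ 2 = 0) : a = 0 :=
  funext fun i => (Finset.sum_mul_self_eq_zero_iff _ _).mp (by simpa [sq] using ha) i
    (Finset.mem_univ i)

theorem abs_dotProduct_mulVec_le_of_forall_sum_sq_eq_one {B : Matrix V V ℝ} {β : ℝ}
    (hB : ∀ x y : V → ℝ, ∑ i, x i = 0 → ∑ i, x i ^ 2 = 1 → ∑ i, y i ^ 2 = 1 →
      |x ⬝ᵥ B *ᵥ y| ≤ β)
    {a b : V → ℝ} (ha : ∑ i, a i = 0) :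
    |a ⬝ᵥ B *ᵥ b| ≤ β * √(∑ i, a i ^ 2) * √(∑ i, b i ^ 2) := by
  by_cases ha0 : ∑ i, a i ^ 2 = 0
  · simp [eq_zero_of_sum_sq_eq_zero ha0]
  by_cases hb0 : ∑ i, b i ^ 2 = 0
  · simp [eq_zero_of_sum_sq_eq_zero hb0]
  have h := hB _ _ (by simp [← Finset.mul_sum, ha]) (sum_sq_inv_sqrt_sum_sq_smul ha0)
    (sum_sq_inv_sqrt_sum_sq_smul hb0)
  rw [mulVec_smul, dotProduct_smul, smul_dotProduct, smul_eq_mul, smul_eq_mul, abs_mul, abs_mul,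
    abs_inv, abs_inv, abs_of_nonneg (Real.sqrt_nonneg _), abs_of_nonneg (Real.sqrt_nonneg _),
    inv_mul_le_iff₀ (by positivity), inv_mul_le_iff₀ (by positivity)] at h
  linarith

theorem sum_sub_average_smul_one_eq_zero [Nonempty V] (y : V → ℝ) :
    ∑ i, (y - ((∑ j, y j) / Fintype.card V) • 1) i = 0 := by
  have hN : (Fintype.card V : ℝ) ≠ 0 := Nat.cast_ne_zero.mpr Fintype.card_ne_zero
  simp [Finset.sum_sub_distrib, mul_div_cancel₀ _ hN]

theorem sum_sq_sub_average_smul_one_le [Nonempty V] (y : V → ℝ) :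
    ∑ i, (y - ((∑ j, y j) / Fintype.card V) • 1) i ^ 2 ≤ ∑ i, y i ^ 2 := by
  have hN : (Fintype.card V : ℝ) ≠ 0 := Nat.cast_ne_zero.mpr Fintype.card_ne_zero
  set c := (∑ j, y j) / Fintype.card V
  have hc : ∑ j, y j = Fintype.card V * c := (mul_div_cancel₀ _ hN).symm
  simp only [Pi.sub_apply, Pi.smul_apply, Pi.one_apply, smul_eq_mul, mul_one, sub_sq,
    Finset.sum_add_distrib, Finset.sum_sub_distrib, ← Finset.mul_sum, ← Finset.sum_mul,
    Finset.sum_const, Finset.card_univ, nsmul_eq_mul, hc]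
  nlinarith [sq_nonneg c, (Nat.cast_nonneg (Fintype.card V) : (0 : ℝ) ≤ _)]

theorem abs_dotProduct_mulVec_self_le [Nonempty V] {B : Matrix V V ℝ} (hB : B.IsSymm)
    {β γ r σ : ℝ} (hβ : 0 ≤ β)
    (hmean : ∀ a b : V → ℝ, ∑ i, a i = 0 →
      |a ⬝ᵥ B *ᵥ b| ≤ β * √(∑ i, a i ^ 2) * √(∑ i, b i ^ 2))
    (hone : |1 ⬝ᵥ B *ᵥ 1| ≤ Fintype.card V * γ) {y : V → ℝ} (hy : ∑ i, y i ^ 2 ≤ r)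
    (hsum : |∑ i, y i| ≤ σ) :
    |y ⬝ᵥ B *ᵥ y| ≤
      β * r + 2 * β * √r * σ / √(Fintype.card V) + γ * σ ^ 2 / Fintype.card V := by
  set N : ℝ := (Fintype.card V : ℝ)
  have hN : 0 < N := Nat.cast_pos.mpr Fintype.card_pos
  set c := (∑ i, y i) / N
  set w := y - c • 1
  have hw : ∑ i, w i = 0 := sum_sub_average_smul_one_eq_zero y
  have hw2 : ∑ i, w i ^ 2 ≤ r := (sum_sq_sub_average_smul_one_le y).trans hy
  have hc : |c| ≤ σ / N := by
    rw [abs_div, abs_of_pos hN]; gcongr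
  have hww : |w ⬝ᵥ B *ᵥ w| ≤ β * r := by
    grw [hmean w w hw, mul_assoc, Real.mul_self_sqrt (Finset.sum_nonneg fun i _ => sq_nonneg _),
      hw2]
  have hw1 : |w ⬝ᵥ B *ᵥ 1| ≤ β * √r * √N := by
    grw [hmean w 1 hw, hw2]
    simp [N]
  have hσ : 0 ≤ σ := (abs_nonneg _).trans hsum
  rw [show y = w + c • 1 by simp [w], hB.add_dotProduct_mulVec_add]
  calc _ ≤ |w ⬝ᵥ B *ᵥ w| + 2 * |c| * |w ⬝ᵥ B *ᵥ 1| + |c| ^ 2 * |1 ⬝ᵥ B *ᵥ 1| := by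
        refine (abs_add_three _ _ _).trans_eq ?_
        simp only [mulVec_smul, dotProduct_smul, smul_dotProduct, smul_eq_mul, abs_mul, abs_two]
        ring
    _ ≤ β * r + 2 * (σ / N) * (β * √r * √N) + (σ / N) ^ 2 * (N * γ) := by
        gcongr
    _ = _ := by
        field_simp
        linear_combination 2 * β * σ * √r * Real.mul_self_sqrt hN.le

end QuadraticForm

namespace SimpleGraph

open Matrix

/-- `sortedLapEigs` uses the instances `Fintype.ofFinite` and `Classical.decEq`; this lemma
transports it to arbitrary ones. -/
theorem exists_equiv_sortedLapEigs_eq {V : Type*} [Finite V] [Fintype V] [DecidableEq V]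
    (G : SimpleGraph V) : ∃ τ : Fin (Nat.card V) ≃ V,
      sortedLapEigs G = (normLap_isHermitian G).eigenvalues ∘ τ ∧ Monotone (sortedLapEigs G) := by
  obtain rfl : ‹Fintype V› = Fintype.ofFinite V := Subsingleton.elim _ _
  obtain rfl : ‹DecidableEq V› = Classical.decEq V := Subsingleton.elim _ _
  let _ := Fintype.ofFinite V
  refine ⟨(Tuple.sort _).trans ((finCongr Nat.card_eq_fintype_card).trans
    (Fintype.equivFin V).symm), rfl, ?_⟩
  unfold sortedLapEigs
  exact Tuple.monotone_sort _

variable {V : Type*} [Fintype V] (G : SimpleGraph V)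

/-- The diagonal of `T^{-1/2}`; as `(√0)⁻¹ = 0`, it vanishes at isolated vertices, which is the
paper's convention. -/
noncomputable def degInvSqrt (v : V) : ℝ := (√(G.degree v))⁻¹

theorem degInvSqrt_eq_ite (v : V) :
    G.degInvSqrt v = if 0 < G.degree v then 1 / √(G.degree v) else 0 := by
  split_ifs with h
  · rw [degInvSqrt, one_div]
  · simp [degInvSqrt, Nat.eq_zero_of_not_pos h]

theorem degInvSqrt_sq (v : V) : G.degInvSqrt v ^ 2 = (G.degree v : ℝ)⁻¹ := by
  rw [degInvSqrt, inv_pow, Real.sq_sqrt (Nat.cast_nonneg _)]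

theorem degInvSqrt_mul_sqrt_of_adj {u v : V} (h : G.Adj u v) :
    G.degInvSqrt v * √(G.degree v) = 1 :=
  inv_mul_cancel₀ <| Real.sqrt_ne_zero'.mpr <| Nat.cast_pos.mpr <|
    (G.degree_pos_iff_exists_adj v).mpr ⟨u, h.symm⟩

theorem sqrt_degree_mul_ite (v : V) :
    √(G.degree v) * (if 0 < G.degree v then 1 else 0) = √(G.degree v) := by
  split_ifs with h
  · rw [mul_one]
  · simp [Nat.eq_zero_of_not_pos h]

theorem normLap_eq :
    normLap G = diagonal (fun v => if 0 < G.degree v then 1 else 0) -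
      diagonal G.degInvSqrt * G.adjMatrix ℝ * diagonal G.degInvSqrt := by
  ext u v
  simp only [normLap, Matrix.sub_apply, diagonal_apply, mul_diagonal, diagonal_mul,
    adjMatrix_apply, degInvSqrt, ite_and]
  split_ifs <;> simp_all [mul_comm]

theorem normLap_mulVec (x : V → ℝ) :
    normLap G *ᵥ x = (fun v => if 0 < G.degree v then x v else 0) -
      G.degInvSqrt * (G.adjMatrix ℝ *ᵥ (G.degInvSqrt * x)) := by
  ext v
  simp [normLap_eq, sub_mulVec, ← mulVec_mulVec, mulVec_diagonal]

theorem normLap_mulVec_sqrt_degree : normLap G *ᵥ (fun v => √(G.degree v)) = 0 := by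
  have hA : G.adjMatrix ℝ *ᵥ (G.degInvSqrt * fun v => √(G.degree v)) =
      fun v => (G.degree v : ℝ) := by
    ext u
    rw [← mul_one (G.degree u : ℝ), ← adjMatrix_mulVec_const_apply]
    refine Finset.sum_congr rfl fun v _ => ?_
    by_cases h : G.Adj u v
    · simp [G.degInvSqrt_mul_sqrt_of_adj h]
    · simp [h]
  ext v
  rw [normLap_mulVec, hA]
  by_cases h : 0 < G.degree v
  · simp [h, degInvSqrt, inv_mul_eq_div, Real.div_sqrt]
  · simp [Nat.eq_zero_of_not_pos h]

theorem normLap_mulVec_single_of_degree_eq_zero {v : V} (hv : G.degree v = 0) :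
    normLap G *ᵥ Pi.single v 1 = 0 := by
  have hs : G.degInvSqrt * Pi.single v 1 = 0 := by
    ext w; by_cases h : w = v <;> simp [h, degInvSqrt, hv]
  ext w
  rw [normLap_mulVec, hs]
  by_cases h : w = v <;> simp [h, hv]

open WithLp in
noncomputable def sqrtDegIsolatedSpan : Submodule ℝ (EuclideanSpace ℝ V) :=
  Submodule.span ℝ ↑(insert (toLp 2 fun v => √(G.degree v) : EuclideanSpace ℝ V)
    ({v | G.degree v = 0}.toFinset.image fun v => toLp 2 (Pi.single v (1 : ℝ))))

theorem sqrtDegIsolatedSpan_le_ker :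
    G.sqrtDegIsolatedSpan ≤ LinearMap.ker (toEuclideanLin (normLap G)) := by
  refine Submodule.span_le.mpr ?_
  simp only [Finset.coe_insert, Finset.coe_image, Set.insert_subset_iff, Set.image_subset_iff]
  refine ⟨?_, fun v hv => ?_⟩
  · simp [toLpLin_apply, normLap_mulVec_sqrt_degree]
  · simp [toLpLin_apply, G.normLap_mulVec_single_of_degree_eq_zero (by simpa using hv)]

theorem finrank_sqrtDegIsolatedSpan_le :
    Module.finrank ℝ G.sqrtDegIsolatedSpan ≤ {v | G.degree v = 0}.ncard + 1 := by
  refine (finrank_span_finset_le_card _).trans ?_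
  grw [Finset.card_insert_le, Finset.card_image_le, Set.ncard_eq_toFinset_card']

theorem eq_zero_and_sum_eq_zero_of_mem_orthogonal_sqrtDegIsolatedSpan {x : EuclideanSpace ℝ V}
    (hx : x ∈ G.sqrtDegIsolatedSpanᗮ) :
    (∀ v, G.degree v = 0 → x v = 0) ∧ ∑ v, x v * √(G.degree v) = 0 := by
  rw [sqrtDegIsolatedSpan, Submodule.mem_orthogonal] at hx
  have h := fun u hu => hx u (Submodule.subset_span hu)
  simp only [Finset.coe_insert, Finset.coe_image, Set.forall_mem_insert, Set.forall_mem_image,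
    EuclideanSpace.inner_eq_star_dotProduct] at h
  refine ⟨fun v hv => ?_, by simpa [dotProduct] using h.1⟩
  simpa using h.2 (by simpa using hv)

open scoped InnerProductSpace in
theorem abs_one_sub_sortedLapEigs_le {ε : ℝ}
    (hquad : ∀ x : V → ℝ, ∑ v, x v ^ 2 = 1 → (∀ v, G.degree v = 0 → x v = 0) →
      ∑ v, x v * √(G.degree v) = 0 → |1 - x ⬝ᵥ normLap G *ᵥ x| ≤ ε)
    (j : Fin (Nat.card V)) (hj : {v | G.degree v = 0}.ncard < j) :
    |1 - sortedLapEigs G j| ≤ ε := by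
  obtain ⟨τ, hτ, hmono⟩ := G.exists_equiv_sortedLapEigs_eq
  have hH := normLap_isHermitian G
  have hε : ∀ x ∈ G.sqrtDegIsolatedSpanᗮ, ‖x‖ = 1 →
      |1 - ⟪toEuclideanLin (normLap G) x, x⟫_ℝ| ≤ ε := fun x hx hx1 => by
    obtain ⟨hx0, hxg⟩ := G.eq_zero_and_sum_eq_zero_of_mem_orthogonal_sqrtDegIsolatedSpan hx
    have := hquad x (by rw [← EuclideanSpace.real_norm_sq_eq, hx1, one_pow]) hx0 hxg
    simpa [toLpLin_apply, EuclideanSpace.inner_eq_star_dotProduct] using this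
  have hμ : ∀ i, |1 - hH.eigenvalues i| ≤ ε ∨
      (hH.eigenvalues i = 0 ∧ hH.eigenvectorBasis i ∈ G.sqrtDegIsolatedSpan) := fun i =>
    abs_one_sub_le_or_mem_of_eigenvector (isSymmetric_toEuclideanLin_iff.mpr hH)
      G.sqrtDegIsolatedSpan_le_ker hε (by ext1; simp [toLpLin_apply, hH.mulVec_eigenvectorBasis])
      (hH.eigenvectorBasis.orthonormal.ne_zero i)
  rw [hτ] at hmono ⊢
  exact abs_one_sub_le_of_monotone_of_finrank_le hH.eigenvectorBasis.orthonormal hμ τ.injective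
    hmono (by have := G.finrank_sqrtDegIsolatedSpan_le; omega)

theorem sum_adjMatrix_mulVec (f : V → ℝ) :
    ∑ v, (G.adjMatrix ℝ *ᵥ f) v = ∑ u, G.degree u * f u := by
  have := G.isSymm_adjMatrix.dotProduct_mulVec_comm 1 f
  rw [one_dotProduct] at this
  rw [this, dotProduct]
  refine Finset.sum_congr rfl fun u _ => ?_
  rw [mul_comm, ← mul_one (G.degree u : ℝ), ← adjMatrix_mulVec_const_apply]
  rfl

theorem dotProduct_adjMatrix_mulVec_self_eq_zero {a : V → ℝ}
    (h : ∀ u v, a u ≠ 0 → a v ≠ 0 → ¬ G.Adj u v) : a ⬝ᵥ G.adjMatrix ℝ *ᵥ a = 0 := by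
  rw [dotProduct_mulVec_adjMatrix]
  refine Finset.sum_eq_zero fun u _ => Finset.sum_eq_zero fun v _ => ?_
  split_ifs with hadj
  · by_contra hne
    exact h u v (left_ne_zero_of_mul hne) (right_ne_zero_of_mul hne) hadj
  · rfl

theorem sq_dotProduct_adjMatrix_mulVec_le {a b : V → ℝ}
    (h : ∀ v, b v ≠ 0 → {u | u ∈ G.neighborFinset v ∧ a u ≠ 0}.Subsingleton) :
    (a ⬝ᵥ G.adjMatrix ℝ *ᵥ b) ^ 2 ≤ (∑ u, G.degree u * a u ^ 2) * ∑ v, b v ^ 2 := by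
  set t : V → ℝ := fun v => if b v = 0 then 0 else (G.adjMatrix ℝ *ᵥ a) v
  have hbt : a ⬝ᵥ G.adjMatrix ℝ *ᵥ b = ∑ v, b v * t v := by
    rw [G.isSymm_adjMatrix.dotProduct_mulVec_comm]
    refine Finset.sum_congr rfl fun v _ => ?_
    by_cases hb : b v = 0 <;> simp [t, hb]
  have ht : ∀ v, t v ^ 2 ≤ (G.adjMatrix ℝ *ᵥ fun u => a u ^ 2) v := fun v => by
    by_cases hb : b v = 0
    · simp only [t, hb, if_true, adjMatrix_mulVec_apply, zero_pow two_ne_zero]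
      exact Finset.sum_nonneg fun u _ => sq_nonneg (a u)
    · simpa [t, hb] using Finset.sq_sum_le_sum_sq_of_subsingleton (h v hb)
  calc (a ⬝ᵥ G.adjMatrix ℝ *ᵥ b) ^ 2 ≤ (∑ v, b v ^ 2) * ∑ v, t v ^ 2 := by
        rw [hbt]; exact Finset.sum_mul_sq_le_sq_mul_sq _ _ _
    _ ≤ (∑ v, b v ^ 2) * ∑ u, G.degree u * a u ^ 2 := by
        grw [Finset.sum_le_sum fun v _ => ht v, sum_adjMatrix_mulVec]
    _ = _ := mul_comm _ _

theorem one_sub_dotProduct_normLap_mulVec {x : V → ℝ} (hx1 : ∑ v, x v ^ 2 = 1)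
    (hx0 : ∀ v, G.degree v = 0 → x v = 0) :
    1 - x ⬝ᵥ normLap G *ᵥ x =
      (G.degInvSqrt * x) ⬝ᵥ G.adjMatrix ℝ *ᵥ (G.degInvSqrt * x) := by
  have hpos : x ⬝ᵥ (fun v => if 0 < G.degree v then x v else 0) = 1 := by
    rw [← hx1]
    refine Finset.sum_congr rfl fun v _ => ?_
    by_cases h : 0 < G.degree v
    · simp [h, sq]
    · simp [h, hx0 v (Nat.eq_zero_of_not_pos h)]
  rw [normLap_mulVec, dotProduct_sub, hpos, sub_sub_cancel]
  simp only [dotProduct, Pi.mul_apply]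
  exact Finset.sum_congr rfl fun v _ => by ring

theorem sum_degree_mul_indicator_sq_le (s : Set V) (x : V → ℝ) :
    ∑ v, G.degree v * s.indicator (G.degInvSqrt * x) v ^ 2 ≤ ∑ v, x v ^ 2 := by
  refine Finset.sum_le_sum fun v _ => ?_
  calc (G.degree v : ℝ) * s.indicator (G.degInvSqrt * x) v ^ 2
      ≤ G.degree v * G.degInvSqrt v ^ 2 * x v ^ 2 := by
        rw [mul_assoc, ← mul_pow]
        by_cases hv : v ∈ s
        · simp [hv]
        · simp only [Set.indicator_of_notMem hv, zero_pow two_ne_zero, mul_zero]; positivity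
    _ ≤ x v ^ 2 := by
        rw [degInvSqrt_sq]
        exact mul_le_of_le_one_left (sq_nonneg _) mul_inv_le_one

theorem sum_indicator_compl_sq_le {t : ℝ} (ht : 0 < t) (x : V → ℝ) :
    ∑ v, {v | (G.degree v : ℝ) ≤ t}ᶜ.indicator (G.degInvSqrt * x) v ^ 2 ≤
      (∑ v, x v ^ 2) / t := by
  rw [Finset.sum_div]
  refine Finset.sum_le_sum fun v _ => ?_
  by_cases hv : (G.degree v : ℝ) ≤ t
  · simp [hv]; positivity
  rw [Set.indicator_of_mem (by exact hv), Pi.mul_apply, mul_pow, degInvSqrt_sq, div_eq_inv_mul]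
  gcongr
  exact le_of_not_ge hv

theorem abs_dotProduct_adjMatrix_mulVec_self_le [Nonempty V] {d C₁ C₂ C₃ M : ℝ} (hC₂ : 0 ≤ C₂)
    (hd : 0 < d) (h1 : ∀ v, (G.degree v : ℝ) ≤ C₁ * d)
    (h2 : ∀ a b : V → ℝ, ∑ i, a i = 0 →
      |a ⬝ᵥ G.adjMatrix ℝ *ᵥ b| ≤ C₂ * √d * √(∑ i, a i ^ 2) * √(∑ i, b i ^ 2))
    {y : V → ℝ} (hy : ∑ i, y i ^ 2 ≤ M / d) (hsum : |∑ i, y i| ≤ C₃ * √(Fintype.card V) / d) :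
    |y ⬝ᵥ G.adjMatrix ℝ *ᵥ y| ≤ C₂ * M / √d + 2 * C₂ * C₃ * √M / d + C₁ * C₃ ^ 2 / d := by
  have hN : (0 : ℝ) < Fintype.card V := Nat.cast_pos.mpr Fintype.card_pos
  have hone : |1 ⬝ᵥ G.adjMatrix ℝ *ᵥ 1| ≤ Fintype.card V * (C₁ * d) := by
    rw [one_dotProduct, G.sum_adjMatrix_mulVec]
    simp only [Pi.one_apply, mul_one]
    rw [abs_of_nonneg (by positivity)]
    grw [Finset.sum_le_sum fun v _ => h1 v]
    simp
  refine (abs_dotProduct_mulVec_self_le G.isSymm_adjMatrix (by positivity) h2 hone hy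
    hsum).trans_eq ?_
  rw [Real.sqrt_div' _ hd.le]
  field_simp
  rw [Real.sq_sqrt hN.le]
  linear_combination (C₂ * M * Fintype.card V) * Real.mul_self_sqrt hd.le

theorem abs_one_sub_dotProduct_normLap_mulVec_le {d C₁ C₂ C₃ M : ℝ} (hC₁ : 0 ≤ C₁)
    (hC₂ : 0 ≤ C₂) (hC₃ : 0 ≤ C₃) (hM : 0 < M) (hd : 1 ≤ d)
    (h1 : ∀ v, (G.degree v : ℝ) ≤ C₁ * d)
    (h2 : ∀ a b : V → ℝ, ∑ i, a i = 0 →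
      |a ⬝ᵥ G.adjMatrix ℝ *ᵥ b| ≤ C₂ * √d * √(∑ i, a i ^ 2) * √(∑ i, b i ^ 2))
    (h3a : ∀ u v, (G.degree u : ℝ) ≤ d / M → (G.degree v : ℝ) ≤ d / M → ¬ G.Adj u v)
    (h3c : ∀ u, ¬ (G.degree u : ℝ) ≤ d / M →
      {v | (G.degree v : ℝ) ≤ d / M ∧ G.Adj u v}.Subsingleton)
    (h4 : ∀ x : V → ℝ, ∑ i, x i ^ 2 = 1 → ∑ v, x v * √(G.degree v) = 0 →
      |∑ v, x v * G.degInvSqrt v * (if (G.degree v : ℝ) ≤ d / M then 0 else 1)| ≤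
        C₃ * √(Fintype.card V) / d)
    (x : V → ℝ) (hx1 : ∑ v, x v ^ 2 = 1) (hx0 : ∀ v, G.degree v = 0 → x v = 0)
    (hxg : ∑ v, x v * √(G.degree v) = 0) :
    |1 - x ⬝ᵥ normLap G *ᵥ x| ≤
      (2 * √M + C₂ * M + 2 * C₂ * C₃ * √M + C₁ * C₃ ^ 2) / √d := by
  have : Nonempty V := by
    by_contra h
    rw [not_nonempty_iff] at h
    simp at hx1
  have hd0 : 0 < d := one_pos.trans_le hd
  rw [G.one_sub_dotProduct_normLap_mulVec hx1 hx0]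
  set s := {v | (G.degree v : ℝ) ≤ d / M}
  set z := G.degInvSqrt * x
  have hz₁ : s.indicator z ⬝ᵥ G.adjMatrix ℝ *ᵥ s.indicator z = 0 :=
    G.dotProduct_adjMatrix_mulVec_self_eq_zero fun u v hu hv =>
      h3a u v (Set.mem_of_indicator_ne_zero (s := s) hu)
        (Set.mem_of_indicator_ne_zero (s := s) hv)
  have hz₂ : ∑ v, sᶜ.indicator z v ^ 2 ≤ M / d := by
    simpa [hx1] using G.sum_indicator_compl_sq_le (div_pos hd0 hM) x
  have hcross : |s.indicator z ⬝ᵥ G.adjMatrix ℝ *ᵥ sᶜ.indicator z| ≤ √M / √d := by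
    rw [← Real.sqrt_div' _ hd0.le]
    refine Real.abs_le_sqrt ((G.sq_dotProduct_adjMatrix_mulVec_le fun v hv => ?_).trans ?_)
    · refine (h3c v (Set.mem_of_indicator_ne_zero hv)).anti fun u ⟨hu, hzu⟩ =>
        ⟨Set.mem_of_indicator_ne_zero (s := s) hzu, (G.mem_neighborFinset v u).mp hu⟩
    · grw [G.sum_degree_mul_indicator_sq_le, hx1, one_mul, hz₂]
  have hsum : |∑ v, sᶜ.indicator z v| ≤ C₃ * √(Fintype.card V) / d := by
    convert h4 x hx1 hxg using 3 with v
    by_cases hv : (G.degree v : ℝ) ≤ d / M <;> simp [s, z, hv, mul_comm]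
  have hsd : √d ≤ d := (Real.sqrt_le_left hd0.le).mpr (by nlinarith)
  rw [← Set.indicator_self_add_compl s z, G.isSymm_adjMatrix.add_dotProduct_mulVec_add, hz₁,
    zero_add]
  calc _ ≤ 2 * |s.indicator z ⬝ᵥ G.adjMatrix ℝ *ᵥ sᶜ.indicator z| +
        |sᶜ.indicator z ⬝ᵥ G.adjMatrix ℝ *ᵥ sᶜ.indicator z| := by
        grw [abs_add_le, abs_mul, abs_two]
    _ ≤ 2 * (√M / √d) + (C₂ * M / √d + 2 * C₂ * C₃ * √M / √d + C₁ * C₃ ^ 2 / √d) := by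
        grw [hcross, G.abs_dotProduct_adjMatrix_mulVec_self_le hC₂ hd0 h1 h2 hz₂ hsum]
        gcongr
    _ = _ := by ring

end SimpleGraph

/-- The deterministic spectral-gap lemma: for a graph `G` on `n`
vertices satisfying the bounded-degree, adjacency-matrix, fuzz and parallel-eigenspace
conditions with constants `C₁, C₂, C₃, M`, there is `C = C(C₁,C₂,C₃,M)` with
`max_{i > I+1} |1 − λ_i| < C/√d`, where `I` is the number of isolated vertices. -/
theorem stmt_4 (C₁ C₂ C₃ M : ℝ) (hC₁ : 0 < C₁) (hC₂ : 0 < C₂) (hC₃ : 0 < C₃)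
    (hM : 0 < M) :
    ∃ C : ℝ, 0 < C ∧ ∀ (n : ℕ) (d : ℝ), 1 ≤ d → ∀ G : SimpleGraph (Fin n),
    -- (1) bounded degree condition
    (∀ v, (G.degree v : ℝ) ≤ C₁ * d) →
    -- (2) adjacency matrix condition
    (∀ x y : Fin n → ℝ, (∑ i, x i) = 0 → (∑ i, x i ^ 2) = 1 → (∑ i, y i ^ 2) = 1 →
      |∑ u, ∑ v, x u * ((if G.Adj u v then (1 : ℝ) else 0) * y v)| ≤ C₂ * Real.sqrt d) →
    -- (3) fuzz condition: ℵ_M = {v | deg v ≤ d/M} is independent, small, and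
    -- vertices outside it have at most one neighbour inside it
    (∀ u v : Fin n, (G.degree u : ℝ) ≤ d / M → (G.degree v : ℝ) ≤ d / M → ¬ G.Adj u v) →
    (({v : Fin n | (G.degree v : ℝ) ≤ d / M}.ncard : ℝ) ≤ n / 2) →
    (∀ u : Fin n, ¬ ((G.degree u : ℝ) ≤ d / M) →
      {v : Fin n | (G.degree v : ℝ) ≤ d / M ∧ G.Adj u v}.ncard ≤ 1) →
    -- (4) parallel eigenspaces condition
    (∀ x : Fin n → ℝ, (∑ i, x i ^ 2) = 1 →
      (∑ v, x v * Real.sqrt (G.degree v) * (if 0 < G.degree v then (1 : ℝ) else 0)) = 0 →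
      |∑ v, x v * (if 0 < G.degree v then 1 / Real.sqrt (G.degree v) else 0) *
          (if (G.degree v : ℝ) ≤ d / M then 0 else 1)| ≤ C₃ * Real.sqrt n / d) →
    -- conclusion
    ∀ j : Fin (Nat.card (Fin n)), {v : Fin n | G.degree v = 0}.ncard < (j : ℕ) →
      |1 - sortedLapEigs G j| < C / Real.sqrt d := by
  refine ⟨2 * √M + C₂ * M + 2 * C₂ * C₃ * √M + C₁ * C₃ ^ 2 + 1, by positivity, ?_⟩
  intro n d hd G h1 h2 h3a _ h3c h4 j hj
  have hA (x y : Fin n → ℝ) : x ⬝ᵥ (G.adjMatrix ℝ).mulVec y =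
      ∑ u, ∑ v, x u * ((if G.Adj u v then (1 : ℝ) else 0) * y v) := by
    simp [SimpleGraph.dotProduct_mulVec_adjMatrix, mul_ite]
  have h2' (a b : Fin n → ℝ) (ha : ∑ i, a i = 0) :=
    abs_dotProduct_mulVec_le_of_forall_sum_sq_eq_one (fun x y => by rw [hA]; exact h2 x y)
      (b := b) ha
  have h3c' (u) (hu) := Set.ncard_le_one_iff_subsingleton.mp (h3c u hu)
  refine (G.abs_one_sub_sortedLapEigs_le (G.abs_one_sub_dotProduct_normLap_mulVec_le hC₁.le hC₂.le
    hC₃.le hM hd h1 h2' h3a h3c' fun x hx1 hxg => ?_) j hj).trans_lt ?_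
  · simpa [SimpleGraph.degInvSqrt_eq_ite] using
      h4 x hx1 (by simpa only [mul_assoc, SimpleGraph.sqrt_degree_mul_ite] using hxg)
  exact div_lt_div_of_pos_right (lt_add_one _) (Real.sqrt_pos.mpr (one_pos.trans_le hd))
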